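/- Second derivative of the entropy along a symmetric curve: let a, b, d : ℝ → (0,1) be twice differentiable at c = 1/2 with b(1/2) = a(1/2), b'(1/2) = −a'(1/2), b''(1/2) = a''(1/2), and d'(1/2) = 0. Define S(c) = c²S_o(a(c)) + (1−c)²S_o(b(c)) + 2c(1−c)S_o(d(c)). Then S''(1/2) = 4·(S_o(a) − S_o(d)) + 4·S_o'(a)·a' + (1/2)·( S_o'(a)·a'' + S_o''(a)·a'² + S_o'(d)·d'' ), where a, d, a', a'', d'' are evaluated at c = 1/2. -/

import Mathlib

open Real Filter

noncomputable def So (z : ℝ) : ℝ := -(1/2) * (z * Real.log z + (1 - z) * Real.log (1 - z))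
noncomputable def So' (z : ℝ) : ℝ := -(1/2) * Real.log (z / (1 - z))
noncomputable def So'' (z : ℝ) : ℝ := -(1/2) * (1/z + 1/(1 - z))

lemma hasDerivAt_So {z : ℝ} (hz : z ∈ Set.Ioo (0:ℝ) 1) : HasDerivAt So (So' z) z := by
  have h1 : z ≠ 0 := ne_of_gt hz.1
  have h2 : (1 - z) ≠ 0 := by have := hz.2; intro h; linarith [hz.2, h]
  have hz2 : (0:ℝ) < 1 - z := by linarith [hz.2]
  have hmul : HasDerivAt (fun x : ℝ => x * Real.log x) (Real.log z + 1) z :=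
    Real.hasDerivAt_mul_log h1
  have hone : HasDerivAt (fun x : ℝ => 1 - x) (-1 : ℝ) z := by
    exact (hasDerivAt_id z).const_sub (1:ℝ)
  have hmul2 : HasDerivAt (fun x : ℝ => (1 - x) * Real.log (1 - x))
      ((Real.log (1 - z) + 1) * (-1)) z :=
    (Real.hasDerivAt_mul_log (ne_of_gt hz2)).comp z hone
  have h := ((hmul.add hmul2).const_mul (-(1/2:ℝ)))
  have : So' z = -(1/2) * ((Real.log z + 1) + (Real.log (1 - z) + 1) * (-1)) := by
    rw [So', Real.log_div h1 h2]; ring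
  rw [this]
  exact h

lemma hasDerivAt_So' {z : ℝ} (hz : z ∈ Set.Ioo (0:ℝ) 1) : HasDerivAt So' (So'' z) z := by
  have h1 : z ≠ 0 := ne_of_gt hz.1
  have hz2 : (0:ℝ) < 1 - z := by linarith [hz.2]
  have h2 : (1 - z) ≠ 0 := ne_of_gt hz2
  have hone : HasDerivAt (fun x : ℝ => 1 - x) (-1 : ℝ) z := by
    exact (hasDerivAt_id z).const_sub (1:ℝ)
  have hlog1 : HasDerivAt (fun x : ℝ => Real.log x) (1/z) z := by
    simpa [one_div] using Real.hasDerivAt_log h1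
  have hlog2 : HasDerivAt (fun x : ℝ => Real.log (1 - x)) (z⁻¹ * 0 + (1-z)⁻¹ * (-1)) z := by
    have := (Real.hasDerivAt_log h2).comp z hone
    exact this.congr_deriv (by ring)
  have h : HasDerivAt (fun x : ℝ => -(1/2) * (Real.log x - Real.log (1 - x)))
      (-(1/2) * (1/z - ((z:ℝ)⁻¹ * 0 + (1-z)⁻¹ * (-1)))) z :=
    (hlog1.sub hlog2).const_mul _
  have heq : So' =ᶠ[nhds z] (fun x : ℝ => -(1/2) * (Real.log x - Real.log (1 - x))) := by
    have hmem : Set.Ioo (0:ℝ) 1 ∈ nhds z := (isOpen_Ioo).mem_nhds hz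
    filter_upwards [hmem] with x hx
    rw [So', Real.log_div (ne_of_gt hx.1) (by linarith [hx.2] : (1:ℝ) - x ≠ 0)]
  have h' := h.congr_of_eventuallyEq heq
  have : So'' z = -(1/2) * (1/z - ((z:ℝ)⁻¹ * 0 + (1-z)⁻¹ * (-1))) := by
    rw [So'']; field_simp; ring
  rw [this]; exact h'

/-- Second derivative of the entropy along a symmetric curve of bipodal parameters,
evaluated at `c = 1/2`:
`S''(1/2) = 4(S_o(a) − S_o(d)) + 4S_o'(a)ȧ + (1/2)(S_o'(a)ä + S_o''(a)ȧ² + S_o'(d)d̈)`. -/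
theorem entropy_second_deriv_along_symmetric_curve
    (a b d a' b' d' : ℝ → ℝ) (a'' b'' d'' : ℝ)
    (haI : ∀ c, a c ∈ Set.Ioo (0:ℝ) 1) (hbI : ∀ c, b c ∈ Set.Ioo (0:ℝ) 1)
    (hdI : ∀ c, d c ∈ Set.Ioo (0:ℝ) 1)
    (ha1 : ∀ᶠ c in nhds (1/2 : ℝ), HasDerivAt a (a' c) c)
    (hb1 : ∀ᶠ c in nhds (1/2 : ℝ), HasDerivAt b (b' c) c)
    (hd1 : ∀ᶠ c in nhds (1/2 : ℝ), HasDerivAt d (d' c) c)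
    (ha2 : HasDerivAt a' a'' (1/2)) (hb2 : HasDerivAt b' b'' (1/2))
    (hd2 : HasDerivAt d' d'' (1/2))
    (hba : b (1/2) = a (1/2)) (hb' : b' (1/2) = -(a' (1/2))) (hb'' : b'' = a'')
    (hd' : d' (1/2) = 0) :
    deriv (deriv (fun c => c^2 * So (a c) + (1 - c)^2 * So (b c)
        + 2 * c * (1 - c) * So (d c))) (1/2)
      = 4 * (So (a (1/2)) - So (d (1/2))) + 4 * So' (a (1/2)) * a' (1/2)
          + (1/2) * (So' (a (1/2)) * a'' + So'' (a (1/2)) * (a' (1/2))^2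
              + So' (d (1/2)) * d'') := by
  set G : ℝ → ℝ := fun c => 2*c*So (a c) + c^2 * (So' (a c) * a' c)
      - 2*(1-c)*So (b c) + (1-c)^2 * (So' (b c) * b' c)
      + (2 - 4*c)*So (d c) + 2*c*(1-c)*(So' (d c) * d' c) with hG
  have hF' : ∀ᶠ c in nhds (1/2:ℝ), HasDerivAt (fun c => c^2 * So (a c)
      + (1 - c)^2 * So (b c) + 2 * c * (1 - c) * So (d c)) (G c) c := by
    filter_upwards [ha1, hb1, hd1] with c hac hbc hdc
    have hSa : HasDerivAt (fun c => So (a c)) (So' (a c) * a' c) c :=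
      (hasDerivAt_So (haI c)).comp c hac
    have hSb : HasDerivAt (fun c => So (b c)) (So' (b c) * b' c) c :=
      (hasDerivAt_So (hbI c)).comp c hbc
    have hSd : HasDerivAt (fun c => So (d c)) (So' (d c) * d' c) c :=
      (hasDerivAt_So (hdI c)).comp c hdc
    have hc2 : HasDerivAt (fun x : ℝ => x^2) (2*c) c := by
      simpa using hasDerivAt_pow 2 c
    have h1c : HasDerivAt (fun x : ℝ => (1-x)^2) (2*(1-c)*(-1)) c := by
      have ho : HasDerivAt (fun x : ℝ => 1 - x) (-1 : ℝ) c := by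
        exact (hasDerivAt_id c).const_sub (1:ℝ)
      have := (hasDerivAt_pow 2 (1-c)).comp c ho
      exact this.congr_deriv (by norm_num)
    have hcc : HasDerivAt (fun x : ℝ => 2*x*(1-x)) (2 - 4*c) c := by
      have h2x : HasDerivAt (fun x : ℝ => 2*x) (2:ℝ) c := by
        simpa using (hasDerivAt_id c).const_mul (2:ℝ)
      have ho : HasDerivAt (fun x : ℝ => 1 - x) (-1 : ℝ) c := by
        exact (hasDerivAt_id c).const_sub (1:ℝ)
      have := h2x.mul ho
      exact this.congr_deriv (by ring)
    have h := ((hc2.mul hSa).add (h1c.mul hSb)).add (hcc.mul hSd)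
    exact h.congr_deriv (by simp only [hG]; ring)
  have hd12 : deriv (fun c => c^2 * So (a c) + (1 - c)^2 * So (b c)
      + 2 * c * (1 - c) * So (d c)) =ᶠ[nhds (1/2:ℝ)] G :=
    hF'.mono fun c h => h.deriv
  rw [hd12.deriv_eq]
  -- now compute deriv G (1/2)
  have hac : HasDerivAt a (a' (1/2)) (1/2) := ha1.self_of_nhds
  have hbc : HasDerivAt b (b' (1/2)) (1/2) := hb1.self_of_nhds
  have hdc : HasDerivAt d (d' (1/2)) (1/2) := hd1.self_of_nhds
  have hSa : HasDerivAt (fun c => So (a c)) (So' (a (1/2)) * a' (1/2)) (1/2) :=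
    (hasDerivAt_So (haI _)).comp _ hac
  have hSb : HasDerivAt (fun c => So (b c)) (So' (b (1/2)) * b' (1/2)) (1/2) :=
    (hasDerivAt_So (hbI _)).comp _ hbc
  have hSd : HasDerivAt (fun c => So (d c)) (So' (d (1/2)) * d' (1/2)) (1/2) :=
    (hasDerivAt_So (hdI _)).comp _ hdc
  have hSa' : HasDerivAt (fun c => So' (a c)) (So'' (a (1/2)) * a' (1/2)) (1/2) :=
    (hasDerivAt_So' (haI _)).comp _ hac
  have hSb' : HasDerivAt (fun c => So' (b c)) (So'' (b (1/2)) * b' (1/2)) (1/2) :=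
    (hasDerivAt_So' (hbI _)).comp _ hbc
  have hSd' : HasDerivAt (fun c => So' (d c)) (So'' (d (1/2)) * d' (1/2)) (1/2) :=
    (hasDerivAt_So' (hdI _)).comp _ hdc
  have hid : HasDerivAt (fun x : ℝ => x) (1:ℝ) (1/2) := hasDerivAt_id _
  have h2x : HasDerivAt (fun x : ℝ => 2*x) (2:ℝ) (1/2) := by
    simpa using hid.const_mul (2:ℝ)
  have ho : HasDerivAt (fun x : ℝ => 1 - x) (-1 : ℝ) (1/2) := by
    exact hid.const_sub (1:ℝ)
  have h2o : HasDerivAt (fun x : ℝ => 2*(1-x)) (-2 : ℝ) (1/2) := by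
    have := ho.const_mul (2:ℝ); exact this.congr_deriv (by ring)
  have hc2 : HasDerivAt (fun x : ℝ => x^2) ((2:ℝ)*(1/2)) (1/2) := by
    simpa using hasDerivAt_pow 2 (1/2:ℝ)
  have h1c2 : HasDerivAt (fun x : ℝ => (1-x)^2) (2*(1-(1/2:ℝ))*(-1)) (1/2) := by
    have := (hasDerivAt_pow 2 (1-(1/2):ℝ)).comp (1/2:ℝ) ho
    exact this.congr_deriv (by norm_num)
  have h24 : HasDerivAt (fun x : ℝ => 2 - 4*x) (-4 : ℝ) (1/2) := by
    have := (hasDerivAt_const (1/2:ℝ) (2:ℝ)).sub (hid.const_mul (4:ℝ))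
    exact this.congr_deriv (by norm_num)
  have hcc : HasDerivAt (fun x : ℝ => 2*x*(1-x)) (2 - 4*(1/2:ℝ)) (1/2) := by
    have := h2x.mul ho; exact this.congr_deriv (by ring)
  have hG2 : HasDerivAt G
      ((((((2 * So (a (1/2)) + 2*(1/2:ℝ) * (So' (a (1/2)) * a' (1/2)))
      + ((2*(1/2:ℝ)) * (So' (a (1/2)) * a' (1/2)) + (1/2:ℝ)^2 * ((So'' (a (1/2)) * a' (1/2)) * a' (1/2) + So' (a (1/2)) * a'')))
      - ((-2) * So (b (1/2)) + 2*(1-(1/2:ℝ)) * (So' (b (1/2)) * b' (1/2))))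
      + ((2*(1-(1/2:ℝ))*(-1)) * (So' (b (1/2)) * b' (1/2)) + (1-(1/2:ℝ))^2 * ((So'' (b (1/2)) * b' (1/2)) * b' (1/2) + So' (b (1/2)) * b'')))
      + ((-4) * So (d (1/2)) + (2 - 4*(1/2:ℝ)) * (So' (d (1/2)) * d' (1/2))))
      + ((2 - 4*(1/2:ℝ)) * (So' (d (1/2)) * d' (1/2)) + 2*(1/2:ℝ)*(1-(1/2:ℝ)) * ((So'' (d (1/2)) * d' (1/2)) * d' (1/2) + So' (d (1/2)) * d''))) (1/2) := by
    rw [hG]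
    exact (((((h2x.mul hSa).add (hc2.mul (hSa'.mul ha2))).sub
      (h2o.mul hSb)).add (h1c2.mul (hSb'.mul hb2))).add
      (h24.mul hSd)).add (hcc.mul (hSd'.mul hd2))
  rw [hG2.deriv]
  rw [hba, hb', hb'', hd']
  ring
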